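/- arXiv:1901.06682 — 2 statements merged into one kernel-verified Lean document; each statement's English description precedes it below -/
import Mathlib

section
/- Let L be a positive linear operator from C_{2π}(ℝ²) into itself, let f ∈ C_{2π}(ℝ²), and fix (x,y). For every δ ∈ (0,π) and M ≥ ‖f‖, if |f(u,v) − f(x,y)| ≤ ε + (2M/sin²(δ/2))·(sin²((u−x)/2)+sin²((v−y)/2)) for all (u,v), then |L(f;x,y) − f(x,y)| ≤ ε + K·Σ_{i=0}^{4} |L(f_i;x,y) − f_i(x,y)|, where K = ε + M + 2M/sin²(δ/2), and f_0 = 1, f_1 = sin x, f_2 = sin y, f_3 = cos x, f_4 = cos y (as functions of (x,y)). -/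
open Real

def Cper (f : ℝ × ℝ → ℝ) : Prop :=
  Continuous f ∧ ∀ x y : ℝ, f (x + 2 * π, y) = f (x, y) ∧ f (x, y + 2 * π) = f (x, y)

lemma Cper_comb (a b : ℝ) {f g : ℝ × ℝ → ℝ} (hf : Cper f) (hg : Cper g) :
    Cper (fun p => a * f p + b * g p) := by
  refine ⟨(continuous_const.mul hf.1).add (continuous_const.mul hg.1), fun u v => ?_⟩
  constructor <;>
    simp [(hf.2 u v).1, (hf.2 u v).2, (hg.2 u v).1, (hg.2 u v).2]

lemma Cper_one : Cper (fun _ : ℝ × ℝ => (1:ℝ)) :=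
  ⟨continuous_const, fun _ _ => ⟨rfl, rfl⟩⟩

lemma Cper_s1 : Cper (fun p : ℝ × ℝ => sin p.1) :=
  ⟨Real.continuous_sin.comp continuous_fst, fun u v => ⟨by simp [Real.sin_add_two_pi], rfl⟩⟩

lemma Cper_s2 : Cper (fun p : ℝ × ℝ => sin p.2) :=
  ⟨Real.continuous_sin.comp continuous_snd, fun u v => ⟨rfl, by simp [Real.sin_add_two_pi]⟩⟩

lemma Cper_c1 : Cper (fun p : ℝ × ℝ => cos p.1) :=
  ⟨Real.continuous_cos.comp continuous_fst, fun u v => ⟨by simp [Real.cos_add_two_pi], rfl⟩⟩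

lemma Cper_c2 : Cper (fun p : ℝ × ℝ => cos p.2) :=
  ⟨Real.continuous_cos.comp continuous_snd, fun u v => ⟨rfl, by simp [Real.cos_add_two_pi]⟩⟩

lemma sin_half_sq (t : ℝ) : sin (t / 2) ^ 2 = (1 - cos t) / 2 := by
  rw [Real.sin_sq, Real.cos_sq, show 2 * (t / 2) = t by ring]
  ring

set_option maxHeartbeats 1000000 in
theorem stmt5 (L : (ℝ × ℝ → ℝ) → (ℝ × ℝ → ℝ))
    (hmaps : ∀ f, Cper f → Cper (L f))
    (hlin : ∀ (a b : ℝ) f g, Cper f → Cper g →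
      L (fun p => a * f p + b * g p) = fun p => a * L f p + b * L g p)
    (hpos : ∀ f g, Cper f → Cper g → (∀ p, f p ≤ g p) → ∀ p, L f p ≤ L g p)
    (f : ℝ × ℝ → ℝ) (hf : Cper f) (x y : ℝ) (δ : ℝ) (hδ : δ ∈ Set.Ioo 0 π)
    (M : ℝ) (hM : ∀ p : ℝ × ℝ, |f p| ≤ M)
    (ε : ℝ) (hε : 0 < ε)
    (hineq : ∀ u v : ℝ, |f (u, v) - f (x, y)| ≤
      ε + (2 * M / sin (δ / 2) ^ 2) * (sin ((u - x) / 2) ^ 2 + sin ((v - y) / 2) ^ 2)) :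
    |L f (x, y) - f (x, y)| ≤
      ε + (ε + M + 2 * M / sin (δ / 2) ^ 2) *
        (|L (fun _ => 1) (x, y) - 1| +
         |L (fun p => sin p.1) (x, y) - sin x| +
         |L (fun p => sin p.2) (x, y) - sin y| +
         |L (fun p => cos p.1) (x, y) - cos x| +
         |L (fun p => cos p.2) (x, y) - cos y|) := by
  obtain ⟨hδ0, hδπ⟩ := hδ
  have hM0 : 0 ≤ M := (abs_nonneg (f (0, 0))).trans (hM (0, 0))
  set K := 2 * M / sin (δ / 2) ^ 2 with hKdef
  have hsin : 0 < sin (δ / 2) :=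
    Real.sin_pos_of_pos_of_lt_pi (by linarith) (by linarith [Real.pi_pos])
  have hK0 : 0 ≤ K := by positivity
  set c := f (x, y) with hc
  -- the auxiliary function φ, built as nested linear combinations
  set ψ3 : ℝ × ℝ → ℝ := fun p => sin y * sin p.2 + cos y * cos p.2 with hψ3
  have hCψ3 : Cper ψ3 := Cper_comb _ _ Cper_s2 Cper_c2
  set ψ2 : ℝ × ℝ → ℝ := fun p => cos x * cos p.1 + 1 * ψ3 p with hψ2
  have hCψ2 : Cper ψ2 := Cper_comb _ _ Cper_c1 hCψ3
  set ψ1 : ℝ × ℝ → ℝ := fun p => sin x * sin p.1 + 1 * ψ2 p with hψ1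
  have hCψ1 : Cper ψ1 := Cper_comb _ _ Cper_s1 hCψ2
  set φ : ℝ × ℝ → ℝ := fun p => 1 * 1 + (-(1/2)) * ψ1 p with hφ
  have hCφ : Cper φ := Cper_comb 1 (-(1/2)) Cper_one hCψ1
  have hφ_eq : ∀ u v : ℝ, φ (u, v) = sin ((u - x) / 2) ^ 2 + sin ((v - y) / 2) ^ 2 := by
    intro u v
    rw [sin_half_sq, sin_half_sq, Real.cos_sub, Real.cos_sub]
    simp only [hφ, hψ1, hψ2, hψ3]
    ring
  have hφ_nonneg : ∀ p : ℝ × ℝ, 0 ≤ φ p := by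
    intro p
    rw [show p = (p.1, p.2) from rfl, hφ_eq]
    positivity
  -- pointwise sandwich
  have hbound : ∀ p : ℝ × ℝ, |f p - c| ≤ ε + K * φ p := by
    intro p
    have := hineq p.1 p.2
    rw [← hφ_eq p.1 p.2] at this
    simpa using this
  set lower : ℝ × ℝ → ℝ := fun p => (c - ε) * (fun _ => (1:ℝ)) p + (-K) * φ p with hlow
  set upper : ℝ × ℝ → ℝ := fun p => (c + ε) * (fun _ => (1:ℝ)) p + K * φ p with hup
  have hClow : Cper lower := Cper_comb _ _ Cper_one hCφ
  have hCup : Cper upper := Cper_comb _ _ Cper_one hCφ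
  have hp1 : L lower (x, y) ≤ L f (x, y) := by
    refine hpos lower f hClow hf (fun p => ?_) (x, y)
    have := (abs_le.mp (hbound p)).1
    simp only [hlow]
    linarith
  have hp2 : L f (x, y) ≤ L upper (x, y) := by
    refine hpos f upper hf hCup (fun p => ?_) (x, y)
    have := (abs_le.mp (hbound p)).2
    simp only [hup]
    linarith
  -- notation for the test values
  set T0 := L (fun _ => (1:ℝ)) (x, y) with hT0
  set T1 := L (fun p => sin p.1) (x, y) with hT1
  set T2 := L (fun p => sin p.2) (x, y) with hT2
  set T3 := L (fun p => cos p.1) (x, y) with hT3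
  set T4 := L (fun p => cos p.2) (x, y) with hT4
  -- expand L on the combinations
  have hLψ3 : L ψ3 (x, y) = sin y * T2 + cos y * T4 :=
    congrFun (hlin _ _ _ _ Cper_s2 Cper_c2) (x, y)
  have hLψ2 : L ψ2 (x, y) = cos x * T3 + 1 * L ψ3 (x, y) :=
    congrFun (hlin _ _ _ _ Cper_c1 hCψ3) (x, y)
  have hLψ1 : L ψ1 (x, y) = sin x * T1 + 1 * L ψ2 (x, y) :=
    congrFun (hlin _ _ _ _ Cper_s1 hCψ2) (x, y)
  have hLφ : L φ (x, y) = 1 * T0 + (-(1/2)) * L ψ1 (x, y) :=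
    congrFun (hlin 1 (-(1/2)) _ _ Cper_one hCψ1) (x, y)
  have hLlow : L lower (x, y) = (c - ε) * T0 + (-K) * L φ (x, y) :=
    congrFun (hlin _ _ _ _ Cper_one hCφ) (x, y)
  have hLup : L upper (x, y) = (c + ε) * T0 + K * L φ (x, y) :=
    congrFun (hlin _ _ _ _ Cper_one hCφ) (x, y)
  -- express L φ via the deviations
  have hLφ_val : L φ (x, y) =
      (T0 - 1) - (sin x * (T1 - sin x) + sin y * (T2 - sin y)
        + cos x * (T3 - cos x) + cos y * (T4 - cos y)) / 2 := by
    rw [hLφ, hLψ1, hLψ2, hLψ3]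
    linear_combination (-(1/2)) * Real.sin_sq_add_cos_sq x + (-(1/2)) * Real.sin_sq_add_cos_sq y
  set A0 := |T0 - 1| with hA0
  set A1 := |T1 - sin x| with hA1
  set A2 := |T2 - sin y| with hA2
  set A3 := |T3 - cos x| with hA3
  set A4 := |T4 - cos y| with hA4
  set S := A0 + A1 + A2 + A3 + A4 with hS
  have habs : ∀ t s : ℝ, |sin t * s| ≤ |s| ∧ |cos t * s| ≤ |s| := by
    intro t s
    constructor <;> rw [abs_mul]
    · exact mul_le_of_le_one_left (abs_nonneg _)
        (abs_le.mpr ⟨Real.neg_one_le_sin t, Real.sin_le_one t⟩)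
    · exact mul_le_of_le_one_left (abs_nonneg _)
        (abs_le.mpr ⟨Real.neg_one_le_cos t, Real.cos_le_one t⟩)
  have hLφ_abs : |L φ (x, y)| ≤ S := by
    rw [hLφ_val]
    set a := sin x * (T1 - sin x) with ha
    set b := sin y * (T2 - sin y) with hb
    set a' := cos x * (T3 - cos x) with ha'
    set b' := cos y * (T4 - cos y) with hb'
    have h1 : |a| ≤ A1 := (habs x (T1 - sin x)).1
    have h2 : |b| ≤ A2 := (habs y (T2 - sin y)).1
    have h3 : |a'| ≤ A3 := (habs x (T3 - cos x)).2
    have h4 : |b'| ≤ A4 := (habs y (T4 - cos y)).2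
    have hsum : |a + b + a' + b'| ≤ A1 + A2 + A3 + A4 := by
      have e1 := abs_add_three a b a'
      have e2 := abs_add_le (a + b + a') b'
      linarith
    have e3 := abs_add_le (T0 - 1) (-((a + b + a' + b') / 2))
    rw [abs_neg] at e3
    have e4 : |(a + b + a' + b') / 2| = |a + b + a' + b'| / 2 := by
      rw [abs_div]; norm_num
    have e5 : T0 - 1 - (a + b + a' + b') / 2
        = T0 - 1 + -((a + b + a' + b') / 2) := by ring
    rw [e5]
    rw [e4] at e3
    have hS' : S = A0 + A1 + A2 + A3 + A4 := hS
    have n1 : 0 ≤ A1 := hA1 ▸ abs_nonneg _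
    have n2 : 0 ≤ A2 := hA2 ▸ abs_nonneg _
    have n3 : 0 ≤ A3 := hA3 ▸ abs_nonneg _
    have n4 : 0 ≤ A4 := hA4 ▸ abs_nonneg _
    linarith
  -- deduce bounds
  have hsand1 : (c - ε) * T0 + (-K) * L φ (x, y) ≤ L f (x, y) := hLlow ▸ hp1
  have hsand2 : L f (x, y) ≤ (c + ε) * T0 + K * L φ (x, y) := hLup ▸ hp2
  have hcM : |c| ≤ M := hM (x, y)
  have hA0S : A0 ≤ S := by
    have := abs_nonneg (T1 - sin x); have := abs_nonneg (T2 - sin y)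
    have := abs_nonneg (T3 - cos x); have := abs_nonneg (T4 - cos y)
    rw [hS, hA1, hA2, hA3, hA4]
    linarith
  have hKLφ : K * L φ (x, y) ≤ K * S :=
    mul_le_mul_of_nonneg_left ((le_abs_self _).trans hLφ_abs) hK0
  have hKLφ' : -(K * S) ≤ K * L φ (x, y) := by
    have := mul_le_mul_of_nonneg_left (abs_le.mp hLφ_abs).1 hK0
    nlinarith
  have hT0A : T0 - 1 ≤ A0 := le_abs_self _
  have hT0A' : -A0 ≤ T0 - 1 := neg_abs_le _
  have hcabs : |c * (T0 - 1)| ≤ M * A0 := by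
    rw [abs_mul]; exact mul_le_mul_of_nonneg_right hcM (abs_nonneg _)
  have hcA0 : c * (T0 - 1) ≤ M * A0 := (le_abs_self _).trans hcabs
  have hcA0' : -(M * A0) ≤ c * (T0 - 1) := by
    have := neg_abs_le (c * (T0 - 1)); linarith
  have hεT0 : ε * (T0 - 1) ≤ ε * A0 := mul_le_mul_of_nonneg_left hT0A hε.le
  have hεT0' : -(ε * A0) ≤ ε * (T0 - 1) := by
    have := mul_le_mul_of_nonneg_left hT0A' hε.le; linarith
  have hMA0S : M * A0 ≤ M * S := mul_le_mul_of_nonneg_left hA0S hM0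
  have hεA0S : ε * A0 ≤ ε * S := mul_le_mul_of_nonneg_left hA0S hε.le
  have hexp1 : (c - ε) * T0 + -K * L φ (x, y)
      = c - ε + c * (T0 - 1) - ε * (T0 - 1) - K * L φ (x, y) := by ring
  have hexp2 : (c + ε) * T0 + K * L φ (x, y)
      = c + ε + c * (T0 - 1) + ε * (T0 - 1) + K * L φ (x, y) := by ring
  have hrhs : (ε + M + K) * S = ε * S + M * S + K * S := by ring
  have hSA0 : 0 ≤ A0 := abs_nonneg _
  have hεA0 : 0 ≤ ε * A0 := mul_nonneg hε.le hSA0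
  rw [abs_le]
  constructor <;> linarith
end

section
/- Let (L_{mn}) be a double sequence of positive linear operators from C_{2π}(ℝ²) into itself such that ‖L_{mn}(1) − 1‖ → 0 and γ_{mn} → 0 as m,n → ∞, where γ_{mn} = √(sup_{(x,y)} L_{mn}(φ_{x,y}; x, y)) with φ_{x,y}(u,v) = sin²((u−x)/2)+sin²((v−y)/2). Then for every f ∈ C_{2π}(ℝ²), ‖L_{mn}(f) − f‖ ≤ K·(‖L_{mn}(1)−1‖·ω(f;γ_{mn}) + ω(f;γ_{mn}) + ‖L_{mn}(1)−1‖) for K = max{1+π², ‖f‖}, and hence ‖L_{mn}(f) − f‖ → 0. -/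
open Real

/-- The sup norm on functions on `ℝ²`. -/
noncomputable def supNorm (g : ℝ × ℝ → ℝ) : ℝ :=
  sSup {a | ∃ p : ℝ × ℝ, a = |g p|}

/-- Modulus of continuity of `f` w.r.t. the Euclidean distance on `ℝ²`. -/
noncomputable def modCont (f : ℝ × ℝ → ℝ) (δ : ℝ) : ℝ :=
  sSup {d | ∃ z w : ℝ × ℝ, Real.sqrt ((z.1 - w.1) ^ 2 + (z.2 - w.2) ^ 2) ≤ δ ∧ d = |f z - f w|}

/-- Convergence of a double sequence of reals (Pringsheim sense). -/
def Conv2 (a : ℕ → ℕ → ℝ) (l : ℝ) : Prop :=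
  ∀ ε : ℝ, 0 < ε → ∃ N : ℕ, ∀ m n : ℕ, N ≤ m → N ≤ n → |a m n - l| < ε

lemma cper_const (c : ℝ) : Cper (fun _ => c) := ⟨continuous_const, fun _ _ => ⟨rfl, rfl⟩⟩

lemma Cper.int_shift {f} (hf : Cper f) (a b : ℤ) (x y : ℝ) :
    f (x + 2 * π * a, y + 2 * π * b) = f (x, y) := by
  have h1 : ∀ y' : ℝ, Function.Periodic (fun x => f (x, y')) (2 * π) := fun y' x => (hf.2 x y').1
  have h2 : ∀ x' : ℝ, Function.Periodic (fun y => f (x', y)) (2 * π) := fun x' y => (hf.2 x' y).2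
  have e1 := (h1 (y + 2 * π * b)).int_mul a x
  have e2 := (h2 x).int_mul b y
  simp only [mul_comm (a : ℝ) (2 * π), mul_comm (b : ℝ) (2 * π)] at e1 e2
  simpa [e1] using e2

lemma Cper.bounded {f} (hf : Cper f) : ∃ M, 0 ≤ M ∧ ∀ p, |f p| ≤ M := by
  have hQ : IsCompact (Set.Icc (0:ℝ) (2*π) ×ˢ Set.Icc (0:ℝ) (2*π)) :=
    isCompact_Icc.prod isCompact_Icc
  have hne : ((0:ℝ), (0:ℝ)) ∈ Set.Icc (0:ℝ) (2*π) ×ˢ Set.Icc (0:ℝ) (2*π) := by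
    constructor <;> constructor <;> simp [pi_pos.le] <;> positivity
  obtain ⟨p₀, _, hp₀⟩ := hQ.exists_isMaxOn ⟨_, hne⟩ ((continuous_abs.comp hf.1).continuousOn)
  refine ⟨|f p₀|, abs_nonneg _, fun p => ?_⟩
  obtain ⟨x, y⟩ := p
  set a : ℤ := ⌊x / (2*π)⌋ with ha
  set b : ℤ := ⌊y / (2*π)⌋ with hb
  have hpi : (0:ℝ) < 2*π := by positivity
  have hx1 : (a:ℝ) ≤ x / (2*π) := Int.floor_le _
  have hx2 : x / (2*π) < a + 1 := Int.lt_floor_add_one _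
  have hy1 : (b:ℝ) ≤ y / (2*π) := Int.floor_le _
  have hy2 : y / (2*π) < b + 1 := Int.lt_floor_add_one _
  have hx3 : 0 ≤ x - 2*π*a := by
    have := mul_le_mul_of_nonneg_right hx1 hpi.le
    rw [div_mul_cancel₀] at this <;> nlinarith
  have hx4 : x - 2*π*a ≤ 2*π := by
    have := mul_lt_mul_of_pos_right hx2 hpi
    rw [div_mul_cancel₀] at this <;> nlinarith
  have hy3 : 0 ≤ y - 2*π*b := by
    have := mul_le_mul_of_nonneg_right hy1 hpi.le
    rw [div_mul_cancel₀] at this <;> nlinarith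
  have hy4 : y - 2*π*b ≤ 2*π := by
    have := mul_lt_mul_of_pos_right hy2 hpi
    rw [div_mul_cancel₀] at this <;> nlinarith
  have hmem : ((x - 2*π*a, y - 2*π*b) : ℝ × ℝ) ∈
      Set.Icc (0:ℝ) (2*π) ×ˢ Set.Icc (0:ℝ) (2*π) := ⟨⟨hx3, hx4⟩, ⟨hy3, hy4⟩⟩
  have := hp₀ hmem
  have hfe : f (x - 2*π*a, y - 2*π*b) = f (x, y) := by
    have := hf.int_shift a b (x - 2*π*a) (y - 2*π*b)
    simpa [sub_add_cancel] using this.symm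
  simpa only [Set.mem_setOf_eq, Function.comp, hfe] using this

lemma supNorm_bddAbove {g : ℝ × ℝ → ℝ} {M : ℝ} (h : ∀ p, |g p| ≤ M) :
    BddAbove {a | ∃ p : ℝ × ℝ, a = |g p|} :=
  ⟨M, fun a ⟨p, hp⟩ => hp ▸ h p⟩

lemma abs_le_supNorm {g : ℝ × ℝ → ℝ} {M : ℝ} (h : ∀ p, |g p| ≤ M) (p : ℝ × ℝ) :
    |g p| ≤ supNorm g :=
  le_csSup (supNorm_bddAbove h) ⟨p, rfl⟩

lemma supNorm_nonneg {g : ℝ × ℝ → ℝ} {M : ℝ} (h : ∀ p, |g p| ≤ M) : 0 ≤ supNorm g :=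
  le_trans (abs_nonneg _) (abs_le_supNorm h (0, 0))

lemma supNorm_le {g : ℝ × ℝ → ℝ} {M : ℝ} (h : ∀ p, |g p| ≤ M) : supNorm g ≤ M :=
  csSup_le ⟨|g (0,0)|, ⟨(0,0), rfl⟩⟩ (fun a ⟨p, hp⟩ => hp ▸ h p)

lemma modCont_zero_mem {f : ℝ × ℝ → ℝ} {δ : ℝ} (hδ : 0 ≤ δ) :
    (0:ℝ) ∈ {d | ∃ z w : ℝ × ℝ, Real.sqrt ((z.1 - w.1) ^ 2 + (z.2 - w.2) ^ 2) ≤ δ ∧ d = |f z - f w|} :=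
  ⟨(0,0), (0,0), by simpa using hδ, by simp⟩

lemma modCont_bddAbove {f : ℝ × ℝ → ℝ} {M : ℝ} (h : ∀ p, |f p| ≤ M) (δ : ℝ) :
    BddAbove {d | ∃ z w : ℝ × ℝ, Real.sqrt ((z.1 - w.1) ^ 2 + (z.2 - w.2) ^ 2) ≤ δ ∧ d = |f z - f w|} := by
  refine ⟨2 * M, fun d ⟨z, w, _, hd⟩ => ?_⟩
  have := abs_sub (f z) (f w)
  have h1 := h z; have h2 := h w
  rw [hd]; calc |f z - f w| ≤ |f z| + |f w| := abs_sub _ _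
    _ ≤ 2 * M := by linarith

lemma modCont_nonneg {f : ℝ × ℝ → ℝ} {M : ℝ} (h : ∀ p, |f p| ≤ M) {δ : ℝ} (hδ : 0 ≤ δ) :
    0 ≤ modCont f δ :=
  le_csSup (modCont_bddAbove h δ) (modCont_zero_mem hδ)

lemma le_modCont {f : ℝ × ℝ → ℝ} {M : ℝ} (h : ∀ p, |f p| ≤ M) {δ : ℝ} {z w : ℝ × ℝ}
    (hzw : Real.sqrt ((z.1 - w.1) ^ 2 + (z.2 - w.2) ^ 2) ≤ δ) :
    |f z - f w| ≤ modCont f δ :=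
  le_csSup (modCont_bddAbove h δ) ⟨z, w, hzw, rfl⟩

lemma modCont_le {f : ℝ × ℝ → ℝ} {δ c : ℝ} (hδ : 0 ≤ δ)
    (h : ∀ z w : ℝ × ℝ, Real.sqrt ((z.1 - w.1) ^ 2 + (z.2 - w.2) ^ 2) ≤ δ → |f z - f w| ≤ c) :
    modCont f δ ≤ c :=
  csSup_le ⟨0, modCont_zero_mem hδ⟩ (fun d ⟨z, w, hzw, hd⟩ => hd ▸ h z w hzw)

lemma modCont_mono {f : ℝ × ℝ → ℝ} {M : ℝ} (h : ∀ p, |f p| ≤ M) {δ δ' : ℝ}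
    (h0 : 0 ≤ δ) (hδ : δ ≤ δ') : modCont f δ ≤ modCont f δ' :=
  csSup_le_csSup (modCont_bddAbove h δ') ⟨0, modCont_zero_mem h0⟩
    (fun d ⟨z, w, hzw, hd⟩ => ⟨z, w, hzw.trans hδ, hd⟩)

lemma sqrt_scale (t a b : ℝ) (ht : 0 ≤ t) :
    Real.sqrt ((t*a)^2 + (t*b)^2) = t * Real.sqrt (a^2 + b^2) := by
  rw [show (t*a)^2 + (t*b)^2 = t^2 * (a^2 + b^2) by ring, Real.sqrt_mul (sq_nonneg t),
    Real.sqrt_sq ht]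

lemma chain_bound {f : ℝ × ℝ → ℝ} {M : ℝ} (h : ∀ p, |f p| ≤ M) :
    ∀ (n : ℕ) (δ : ℝ), 0 < δ → ∀ z w : ℝ × ℝ,
      Real.sqrt ((z.1 - w.1) ^ 2 + (z.2 - w.2) ^ 2) ≤ (n + 1) * δ →
      |f z - f w| ≤ (n + 1) * modCont f δ := by
  intro n
  induction n with
  | zero =>
    intro δ hδ z w hzw
    simpa using le_modCont h (by simpa using hzw)
  | succ n ih =>
    intro δ hδ z w hzw
    set t : ℝ := ((n:ℝ)+1)/((n:ℝ)+2) with htdef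
    have hn2 : (0:ℝ) < (n:ℝ)+2 := by positivity
    have ht0 : 0 ≤ t := by positivity
    have ht1 : 0 ≤ 1 - t := by
      rw [htdef, sub_nonneg, div_le_one hn2]; linarith
    set z' : ℝ × ℝ := (w.1 + t*(z.1-w.1), w.2 + t*(z.2-w.2)) with hz'
    set d : ℝ := Real.sqrt ((z.1 - w.1) ^ 2 + (z.2 - w.2) ^ 2) with hd
    have hd0 : 0 ≤ d := Real.sqrt_nonneg _
    have e1 : Real.sqrt ((z'.1 - w.1) ^ 2 + (z'.2 - w.2) ^ 2) = t * d := by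
      rw [hd, ← sqrt_scale t _ _ ht0]
      congr 2 <;> · simp only [hz']; ring
    have e2 : Real.sqrt ((z.1 - z'.1) ^ 2 + (z.2 - z'.2) ^ 2) = (1-t) * d := by
      rw [hd, ← sqrt_scale (1-t) _ _ ht1]
      congr 2 <;> · simp only [hz']; ring
    have hb1 : |f z' - f w| ≤ ((n:ℝ) + 1) * modCont f δ := by
      apply ih δ hδ
      rw [e1]
      calc t * d ≤ t * (((n:ℝ)+1+1) * δ) := by
            apply mul_le_mul_of_nonneg_left _ ht0
            · push_cast at hzw ⊢; linarith
        _ = ((n:ℝ)+1) * δ := by rw [htdef]; field_simp; ring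
    have hb2 : |f z - f z'| ≤ modCont f δ := by
      apply le_modCont h
      rw [e2]
      calc (1-t) * d ≤ (1-t) * (((n:ℝ)+1+1) * δ) := by
            apply mul_le_mul_of_nonneg_left _ ht1
            · push_cast at hzw ⊢; linarith
        _ = δ := by rw [htdef]; field_simp; ring
    calc |f z - f w| = |(f z - f z') + (f z' - f w)| := by ring_nf
      _ ≤ |f z - f z'| + |f z' - f w| := abs_add_le _ _
      _ ≤ modCont f δ + ((n:ℝ)+1) * modCont f δ := add_le_add hb2 hb1
      _ = ((n:ℝ)+1+1) * modCont f δ := by ring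
      _ = (((n+1:ℕ):ℝ)+1) * modCont f δ := by push_cast; ring

lemma quad_bound {f : ℝ × ℝ → ℝ} {M : ℝ} (h : ∀ p, |f p| ≤ M) {δ : ℝ} (hδ : 0 < δ)
    (z w : ℝ × ℝ) :
    |f z - f w| ≤ (1 + ((z.1 - w.1) ^ 2 + (z.2 - w.2) ^ 2)/δ^2) * modCont f δ := by
  set s : ℝ := (z.1 - w.1) ^ 2 + (z.2 - w.2) ^ 2 with hs
  have hs0 : 0 ≤ s := by positivity
  set d : ℝ := Real.sqrt s with hd
  have hd0 : 0 ≤ d := Real.sqrt_nonneg _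
  have hds : d^2 = s := Real.sq_sqrt hs0
  have hω : 0 ≤ modCont f δ := modCont_nonneg h hδ.le
  rcases le_or_gt d δ with hc | hc
  · have h1 : |f z - f w| ≤ modCont f δ := le_modCont h (by rw [← hd]; exact hc)
    nlinarith [div_nonneg hs0 (sq_nonneg δ)]
  · set n : ℕ := ⌊d/δ⌋₊ with hn
    have h1 : d ≤ (n+1) * δ := by
      have := Nat.lt_floor_add_one (d/δ)
      rw [← hn] at this
      have := mul_lt_mul_of_pos_right this hδ
      rw [div_mul_cancel₀ _ hδ.ne'] at this
      linarith
    have h2 : (n:ℝ) ≤ d/δ := Nat.floor_le (by positivity)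
    have h3 : 1 ≤ d/δ := (le_div_iff₀ hδ).mpr (by linarith)
    have h4 : (n:ℝ) + 1 ≤ 1 + s/δ^2 := by
      have h5 : d/δ ≤ (d/δ)^2 := by nlinarith
      have h6 : s/δ^2 = (d/δ)^2 := by rw [div_pow, hds]
      linarith
    have := chain_bound h n δ hδ z w (by rw [← hd]; exact h1)
    calc |f z - f w| ≤ ((n:ℝ)+1) * modCont f δ := this
      _ ≤ (1 + s/δ^2) * modCont f δ := mul_le_mul_of_nonneg_right h4 hω

lemma jordan_sq {t : ℝ} (ht : |t| ≤ π) : t^2 ≤ π^2 * sin (t/2)^2 := by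
  have hπ : 0 < π := pi_pos
  have h1 : 2/π * (|t|/2) ≤ sin (|t|/2) := by
    apply Real.mul_le_sin (by positivity)
    rw [div_le_div_iff_of_pos_right (by norm_num : (0:ℝ) < 2)] at *
    linarith [ht]
  have h2 : sin (|t|/2)^2 = sin (t/2)^2 := by
    rcases abs_cases t with ⟨he, _⟩ | ⟨he, _⟩
    · rw [he]
    · rw [he, show -t/2 = -(t/2) by ring, Real.sin_neg, neg_sq]
  have h3 : 2/π * (|t|/2) = |t|/π := by field_simp
  rw [h3] at h1
  have h4 : (|t|/π)^2 ≤ sin (|t|/2)^2 := by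
    apply pow_le_pow_left₀ (by positivity) h1
  rw [h2] at h4
  have h5 : (|t|/π)^2 = t^2/π^2 := by rw [div_pow, sq_abs]
  rw [h5] at h4
  calc t^2 = t^2/π^2 * π^2 := by field_simp
    _ ≤ sin (t/2)^2 * π^2 := by nlinarith
    _ = π^2 * sin (t/2)^2 := by ring

lemma sin_sq_shift (r : ℝ) (a : ℤ) : sin ((r - 2*π*a)/2)^2 = sin (r/2)^2 := by
  have : (r - 2*π*a)/2 = r/2 - a*π := by ring
  rw [this, Real.sin_sub, Real.sin_int_mul_pi]
  have hc : cos ((a:ℝ)*π)^2 = 1 - sin ((a:ℝ)*π)^2 := by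
    have := Real.sin_sq_add_cos_sq ((a:ℝ)*π); linarith
  rw [Real.sin_int_mul_pi] at hc
  simp only [mul_zero, sub_zero]
  rw [mul_pow, hc]; ring

lemma reduce_coord (r : ℝ) : ∃ a : ℤ, |r - 2*π*a| ≤ π := by
  have hπ : 0 < π := pi_pos
  have hpi : (0:ℝ) < 2*π := by positivity
  refine ⟨⌊(r+π)/(2*π)⌋, ?_⟩
  set a : ℤ := ⌊(r+π)/(2*π)⌋ with ha
  have h1 : (a:ℝ) ≤ (r+π)/(2*π) := Int.floor_le _
  have h2 : (r+π)/(2*π) < a + 1 := Int.lt_floor_add_one _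
  rw [abs_le]
  constructor
  · have := mul_le_mul_of_nonneg_right h1 hpi.le
    rw [div_mul_cancel₀] at this <;> nlinarith
  · have := mul_lt_mul_of_pos_right h2 hpi
    rw [div_mul_cancel₀] at this <;> nlinarith

lemma key_bound {f : ℝ × ℝ → ℝ} {M : ℝ} (hf : Cper f) (h : ∀ p, |f p| ≤ M)
    {δ : ℝ} (hδ : 0 < δ) (z p : ℝ × ℝ) :
    |f z - f p| ≤ (1 + (π^2/δ^2) * (sin ((z.1 - p.1)/2)^2 + sin ((z.2 - p.2)/2)^2)) * modCont f δ := by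
  obtain ⟨a, ha⟩ := reduce_coord (z.1 - p.1)
  obtain ⟨b, hb⟩ := reduce_coord (z.2 - p.2)
  set z' : ℝ × ℝ := (z.1 - 2*π*a, z.2 - 2*π*b) with hz'
  have hfz : f z' = f z := by
    have := hf.int_shift a b (z.1 - 2*π*a) (z.2 - 2*π*b)
    rw [hz']; rw [show z = (z.1, z.2) from rfl]
    rw [← this]; congr 1 <;> ring
  have hsin1 : sin ((z'.1 - p.1)/2)^2 = sin ((z.1 - p.1)/2)^2 := by
    rw [hz', show z.1 - 2*π*a - p.1 = (z.1 - p.1) - 2*π*a by ring, sin_sq_shift]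
  have hsin2 : sin ((z'.2 - p.2)/2)^2 = sin ((z.2 - p.2)/2)^2 := by
    rw [hz', show z.2 - 2*π*b - p.2 = (z.2 - p.2) - 2*π*b by ring, sin_sq_shift]
  have hj1 : (z'.1 - p.1)^2 ≤ π^2 * sin ((z.1 - p.1)/2)^2 := by
    rw [← hsin1]
    apply jordan_sq
    rw [hz', show z.1 - 2*π*a - p.1 = (z.1 - p.1) - 2*π*a by ring]; exact ha
  have hj2 : (z'.2 - p.2)^2 ≤ π^2 * sin ((z.2 - p.2)/2)^2 := by
    rw [← hsin2]
    apply jordan_sq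
    rw [hz', show z.2 - 2*π*b - p.2 = (z.2 - p.2) - 2*π*b by ring]; exact hb
  have hq := quad_bound h hδ z' p
  rw [hfz] at hq
  have hω : 0 ≤ modCont f δ := modCont_nonneg h hδ.le
  refine hq.trans (mul_le_mul_of_nonneg_right ?_ hω)
  have hδ2 : (0:ℝ) < δ^2 := by positivity
  have hle : (z'.1 - p.1)^2 + (z'.2 - p.2)^2 ≤ π^2 * (sin ((z.1 - p.1)/2)^2 + sin ((z.2 - p.2)/2)^2) := by
    nlinarith
  have h8 : ((z'.1 - p.1)^2 + (z'.2 - p.2)^2)/δ^2 ≤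
      π^2/δ^2 * (sin ((z.1 - p.1)/2)^2 + sin ((z.2 - p.2)/2)^2) := by
    rw [div_mul_eq_mul_div]
    gcongr
  linarith

lemma cper_uc {f : ℝ × ℝ → ℝ} (hf : Cper f) {ε : ℝ} (hε : 0 < ε) :
    ∃ δ : ℝ, 0 < δ ∧ ∀ z w : ℝ × ℝ,
      Real.sqrt ((z.1 - w.1) ^ 2 + (z.2 - w.2) ^ 2) ≤ δ → |f z - f w| ≤ ε := by
  have hπ : 0 < π := pi_pos
  set Q : Set (ℝ × ℝ) := Set.Icc (-1:ℝ) (2*π+1) ×ˢ Set.Icc (-1:ℝ) (2*π+1) with hQdef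
  have hQ : IsCompact Q := isCompact_Icc.prod isCompact_Icc
  have huc := hQ.uniformContinuousOn_of_continuous hf.1.continuousOn
  rw [Metric.uniformContinuousOn_iff] at huc
  obtain ⟨δ', hδ', hd⟩ := huc ε hε
  refine ⟨min (δ'/2) 1, by positivity, fun z w hzw => ?_⟩
  have hpi : (0:ℝ) < 2*π := by positivity
  set a : ℤ := ⌊z.1 / (2*π)⌋ with ha
  set b : ℤ := ⌊z.2 / (2*π)⌋ with hb
  set z' : ℝ × ℝ := (z.1 - 2*π*a, z.2 - 2*π*b) with hz'
  set w' : ℝ × ℝ := (w.1 - 2*π*a, w.2 - 2*π*b) with hw'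
  have hfz : f z' = f z := by
    have := hf.int_shift a b (z.1 - 2*π*a) (z.2 - 2*π*b)
    rw [hz', show z = (z.1, z.2) from rfl, ← this]; congr 1 <;> ring
  have hfw : f w' = f w := by
    have := hf.int_shift a b (w.1 - 2*π*a) (w.2 - 2*π*b)
    rw [hw', show w = (w.1, w.2) from rfl, ← this]; congr 1 <;> ring
  -- coordinate bounds for z'
  have hx1 : (a:ℝ) ≤ z.1 / (2*π) := Int.floor_le _
  have hx2 : z.1 / (2*π) < a + 1 := Int.lt_floor_add_one _
  have hy1 : (b:ℝ) ≤ z.2 / (2*π) := Int.floor_le _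
  have hy2 : z.2 / (2*π) < b + 1 := Int.lt_floor_add_one _
  have hz1 : 0 ≤ z'.1 ∧ z'.1 ≤ 2*π := by
    constructor
    · have := mul_le_mul_of_nonneg_right hx1 hpi.le
      rw [div_mul_cancel₀] at this; · simp [hz']; nlinarith
      · exact hpi.ne'
    · have := mul_lt_mul_of_pos_right hx2 hpi
      rw [div_mul_cancel₀] at this; · simp [hz']; nlinarith
      · exact hpi.ne'
  have hz2 : 0 ≤ z'.2 ∧ z'.2 ≤ 2*π := by
    constructor
    · have := mul_le_mul_of_nonneg_right hy1 hpi.le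
      rw [div_mul_cancel₀] at this; · simp [hz']; nlinarith
      · exact hpi.ne'
    · have := mul_lt_mul_of_pos_right hy2 hpi
      rw [div_mul_cancel₀] at this; · simp [hz']; nlinarith
      · exact hpi.ne'
  -- distances
  have hab1 : |z.1 - w.1| ≤ min (δ'/2) 1 := by
    refine le_trans ?_ hzw
    rw [← Real.sqrt_sq_eq_abs]
    exact Real.sqrt_le_sqrt (by nlinarith [sq_nonneg (z.2 - w.2)])
  have hab2 : |z.2 - w.2| ≤ min (δ'/2) 1 := by
    refine le_trans ?_ hzw
    rw [← Real.sqrt_sq_eq_abs]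
    exact Real.sqrt_le_sqrt (by nlinarith [sq_nonneg (z.1 - w.1)])
  have h11 : |z.1 - w.1| ≤ 1 := hab1.trans (min_le_right _ _)
  have h21 : |z.2 - w.2| ≤ 1 := hab2.trans (min_le_right _ _)
  rw [abs_le] at h11 h21
  have hzQ : z' ∈ Q := by
    refine ⟨Set.mem_Icc.mpr ⟨?_, ?_⟩, Set.mem_Icc.mpr ⟨?_, ?_⟩⟩
    · linarith [hz1.1]
    · linarith [hz1.2]
    · linarith [hz2.1]
    · linarith [hz2.2]
  have e1 : w'.1 = z'.1 - (z.1 - w.1) := by simp only [hz', hw']; ring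
  have e2 : w'.2 = z'.2 - (z.2 - w.2) := by simp only [hz', hw']; ring
  have hwQ : w' ∈ Q := by
    refine ⟨Set.mem_Icc.mpr ⟨?_, ?_⟩, Set.mem_Icc.mpr ⟨?_, ?_⟩⟩
    · rw [e1]; linarith [hz1.1, h11.2]
    · rw [e1]; linarith [hz1.2, h11.1]
    · rw [e2]; linarith [hz2.1, h21.2]
    · rw [e2]; linarith [hz2.2, h21.1]
  have hdist : dist z' w' < δ' := by
    rw [Prod.dist_eq]
    have d1 : dist z'.1 w'.1 = |z.1 - w.1| := by
      rw [Real.dist_eq]; congr 1; simp only [hz', hw']; ring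
    have d2 : dist z'.2 w'.2 = |z.2 - w.2| := by
      rw [Real.dist_eq]; congr 1; simp only [hz', hw']; ring
    have := hab1.trans (min_le_left _ _)
    have := hab2.trans (min_le_left _ _)
    rw [d1, d2]
    apply max_lt <;> linarith
  have := hd z' hzQ w' hwQ hdist
  rw [Real.dist_eq, hfz, hfw] at this
  exact this.le

lemma Cper.neg {f} (hf : Cper f) : Cper (fun p => -f p) :=
  ⟨hf.1.neg, fun x y => by simp [(hf.2 x y).1, (hf.2 x y).2]⟩

lemma Cper.sub_const {f} (hf : Cper f) (c : ℝ) : Cper (fun p => f p - c) :=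
  ⟨hf.1.sub continuous_const, fun x y => by simp [(hf.2 x y).1, (hf.2 x y).2]⟩

lemma cper_phi (p : ℝ × ℝ) :
    Cper (fun q : ℝ × ℝ => sin ((q.1 - p.1)/2)^2 + sin ((q.2 - p.2)/2)^2) := by
  constructor
  · apply Continuous.add
    · exact (Real.continuous_sin.comp (by fun_prop)).pow 2
    · exact (Real.continuous_sin.comp (by fun_prop)).pow 2
  · intro x y
    have h1 : ∀ r : ℝ, sin ((r + 2*π)/2)^2 = sin (r/2)^2 := by
      intro r
      rw [show (r + 2*π)/2 = r/2 + π by ring, Real.sin_add_pi, neg_sq]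
    constructor
    · simp only
      rw [show x + 2*π - p.1 = (x - p.1) + 2*π by ring, h1]
    · simp only
      rw [show y + 2*π - p.2 = (y - p.2) + 2*π by ring, h1]

lemma cper_comb (p : ℝ × ℝ) (c C : ℝ) :
    Cper (fun q : ℝ × ℝ => c * (fun _ : ℝ × ℝ => (1:ℝ)) q +
      C * (sin ((q.1 - p.1)/2)^2 + sin ((q.2 - p.2)/2)^2)) := by
  have h := cper_phi p
  refine ⟨by continuity, fun x y => ?_⟩
  obtain ⟨e1, e2⟩ := h.2 x y
  constructor <;> simp only [e1, e2]


set_option maxHeartbeats 1000000 in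
theorem stmt7 (L : ℕ → ℕ → (ℝ × ℝ → ℝ) → (ℝ × ℝ → ℝ))
    (hmaps : ∀ m n f, Cper f → Cper (L m n f))
    (hlin : ∀ m n (a b : ℝ) f g, Cper f → Cper g →
      L m n (fun p => a * f p + b * g p) = fun p => a * L m n f p + b * L m n g p)
    (hpos : ∀ m n f g, Cper f → Cper g → (∀ p, f p ≤ g p) → ∀ p, L m n f p ≤ L m n g p)
    (γ : ℕ → ℕ → ℝ)
    (hγdef : ∀ m n, γ m n = Real.sqrt (sSup {a | ∃ p : ℝ × ℝ,
      a = L m n (fun q => sin ((q.1 - p.1) / 2) ^ 2 + sin ((q.2 - p.2) / 2) ^ 2) p}))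
    (h0 : Conv2 (fun m n => supNorm fun p => L m n (fun _ => 1) p - 1) 0)
    (hγ : Conv2 γ 0) :
    ∀ f, Cper f →
      (∀ m n : ℕ,
        supNorm (fun p => L m n f p - f p) ≤
          max (1 + π ^ 2) (supNorm f) *
            ((supNorm fun p => L m n (fun _ => 1) p - 1) * modCont f (γ m n) +
              modCont f (γ m n) + (supNorm fun p => L m n (fun _ => 1) p - 1))) ∧
      Conv2 (fun m n => supNorm fun p => L m n f p - f p) 0 := by
  intro f hf
  obtain ⟨Mf, hMf0, hMf⟩ := hf.bounded
  have hfs : ∀ p, |f p| ≤ supNorm f := abs_le_supNorm hMf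
  have hMfs0 : 0 ≤ supNorm f := supNorm_nonneg hMf
  set K : ℝ := max (1 + π ^ 2) (supNorm f) with hKdef
  have hK1 : 1 + π ^ 2 ≤ K := le_max_left _ _
  have hK2 : supNorm f ≤ K := le_max_right _ _
  have hK0 : 0 ≤ K := le_trans (by positivity) hK1
  have hone : Cper (fun _ : ℝ × ℝ => (1:ℝ)) := cper_const 1
  -- main inequality
  have main : ∀ m n : ℕ,
      supNorm (fun p => L m n f p - f p) ≤
        K * ((supNorm fun p => L m n (fun _ => 1) p - 1) * modCont f (γ m n) +
          modCont f (γ m n) + (supNorm fun p => L m n (fun _ => 1) p - 1)) := by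
    intro m n
    obtain ⟨M1, hM10, hM1⟩ := (hmaps m n _ hone).bounded
    have hbound1 : ∀ p, |L m n (fun _ => (1:ℝ)) p - 1| ≤ M1 + 1 := fun p => by
      calc |L m n (fun _ => (1:ℝ)) p - 1| ≤ |L m n (fun _ => (1:ℝ)) p| + 1 := by
            simpa using abs_sub (L m n (fun _ => (1:ℝ)) p) 1
        _ ≤ M1 + 1 := by linarith [hM1 p]
    set A : ℝ := supNorm fun p => L m n (fun _ => (1:ℝ)) p - 1 with hAdef
    have hA : ∀ p, |L m n (fun _ => (1:ℝ)) p - 1| ≤ A := abs_le_supNorm hbound1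
    have hA0 : 0 ≤ A := supNorm_nonneg hbound1
    -- L of zero
    have hzero : L m n (fun _ => (0:ℝ)) = fun _ => (0:ℝ) := by
      have h := hlin m n 0 0 (fun _ => (1:ℝ)) (fun _ => (1:ℝ)) hone hone
      have e : (fun p : ℝ × ℝ => (0:ℝ) * (fun _ : ℝ × ℝ => (1:ℝ)) p +
          (0:ℝ) * (fun _ : ℝ × ℝ => (1:ℝ)) p) = (fun _ : ℝ × ℝ => (0:ℝ)) := by
        funext q; simp
      rw [e] at h; rw [h]; funext q; simp
    -- L of negation
    have hneg : ∀ g, Cper g → L m n (fun p => -g p) = fun p => -(L m n g p) := by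
      intro g hg
      have h := hlin m n (-1) 0 g g hg hg
      have e : (fun p : ℝ × ℝ => (-1:ℝ) * g p + (0:ℝ) * g p) = fun p => -g p := by
        funext q; ring
      rw [e] at h; rw [h]; funext q; ring
    -- |L g| ≤ L h for |g| ≤ h
    have habs : ∀ g h', Cper g → Cper h' → (∀ q, |g q| ≤ h' q) →
        ∀ p, |L m n g p| ≤ L m n h' p := by
      intro g h' hg hh hgh p
      have h1 := hpos m n g h' hg hh (fun q => (le_abs_self _).trans (hgh q)) p
      have h2 : -(L m n g p) ≤ L m n h' p := by
        have h3 := hpos m n (fun q => -g q) h' hg.neg hh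
          (fun q => (neg_le_abs _).trans (hgh q)) p
        rw [hneg g hg] at h3
        exact h3
      exact abs_le.mpr ⟨by linarith, h1⟩
    -- facts about S
    set S : ℝ := sSup {a | ∃ p : ℝ × ℝ,
      a = L m n (fun q => sin ((q.1 - p.1) / 2) ^ 2 + sin ((q.2 - p.2) / 2) ^ 2) p} with hSdef
    have hc2 : L m n (fun _ => (2:ℝ)) = fun q => 2 * L m n (fun _ => (1:ℝ)) q := by
      have h := hlin m n 2 0 (fun _ => (1:ℝ)) (fun _ => (1:ℝ)) hone hone
      have e : (fun p : ℝ × ℝ => (2:ℝ) * (fun _ : ℝ × ℝ => (1:ℝ)) p +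
          (0:ℝ) * (fun _ : ℝ × ℝ => (1:ℝ)) p) = (fun _ : ℝ × ℝ => (2:ℝ)) := by
        funext q; norm_num
      rw [e] at h; rw [h]; funext q; norm_num
    have hub : ∀ p : ℝ × ℝ,
        L m n (fun q => sin ((q.1 - p.1) / 2) ^ 2 + sin ((q.2 - p.2) / 2) ^ 2) p ≤ 2 * (1 + A) := by
      intro p
      have step1 := hpos m n _ (fun _ => (2:ℝ)) (cper_phi p) (cper_const 2)
        (fun q => by
          have := Real.sin_sq_le_one ((q.1 - p.1)/2)
          have := Real.sin_sq_le_one ((q.2 - p.2)/2)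
          linarith) p
      rw [hc2] at step1
      have step3 : L m n (fun _ => (1:ℝ)) p ≤ 1 + A := by
        have := (abs_le.mp (hA p)).2; linarith
      calc L m n (fun q => sin ((q.1 - p.1) / 2) ^ 2 + sin ((q.2 - p.2) / 2) ^ 2) p
          ≤ 2 * L m n (fun _ => (1:ℝ)) p := step1
        _ ≤ 2 * (1 + A) := by linarith
    have hSbdd : BddAbove {a | ∃ p : ℝ × ℝ,
        a = L m n (fun q => sin ((q.1 - p.1) / 2) ^ 2 + sin ((q.2 - p.2) / 2) ^ 2) p} :=
      ⟨2 * (1 + A), fun a ⟨p, hp⟩ => hp ▸ hub p⟩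
    have hφnonneg : ∀ p : ℝ × ℝ,
        0 ≤ L m n (fun q => sin ((q.1 - p.1) / 2) ^ 2 + sin ((q.2 - p.2) / 2) ^ 2) p := by
      intro p
      have h3 := hpos m n (fun _ => (0:ℝ)) _ (cper_const 0) (cper_phi p)
        (fun q => by positivity) p
      rw [hzero] at h3
      exact h3
    have hφS : ∀ p : ℝ × ℝ,
        L m n (fun q => sin ((q.1 - p.1) / 2) ^ 2 + sin ((q.2 - p.2) / 2) ^ 2) p ≤ S :=
      fun p => le_csSup hSbdd ⟨p, rfl⟩
    have hS0 : 0 ≤ S := le_trans (hφnonneg (0,0)) (hφS (0,0))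
    have hγS : γ m n = Real.sqrt S := hγdef m n
    have hγ0 : 0 ≤ γ m n := hγS ▸ Real.sqrt_nonneg S
    have hγsq : (γ m n)^2 = S := by rw [hγS, Real.sq_sqrt hS0]
    have hω0 : 0 ≤ modCont f (γ m n) := modCont_nonneg hMf hγ0
    -- master pointwise bound for each δ > 0
    have master : ∀ δ : ℝ, 0 < δ → ∀ p : ℝ × ℝ,
        |L m n f p - f p| ≤ modCont f δ * (1 + A) +
          modCont f δ * (π^2/δ^2) * S + supNorm f * A := by
      intro δ hδ p
      set ω : ℝ := modCont f δ with hωdef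
      have hωnn : 0 ≤ ω := modCont_nonneg hMf hδ.le
      set C : ℝ := π^2/δ^2 with hCdef
      have hCnn : 0 ≤ C := by positivity
      set c : ℝ := f p with hcdef
      -- decomposition
      have hdecomp : L m n f p = L m n (fun q => f q - c) p + c * L m n (fun _ => (1:ℝ)) p := by
        have hd := hlin m n 1 c (fun q => f q - c) (fun _ => (1:ℝ)) (hf.sub_const c) hone
        have e : (fun q : ℝ × ℝ => (1:ℝ) * (fun q => f q - c) q +
            c * (fun _ : ℝ × ℝ => (1:ℝ)) q) = f := by funext q; simp
        rw [e] at hd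
        have := congrFun hd p
        linarith [this]
      -- bound on L (f - c)
      have hkey : ∀ q : ℝ × ℝ, |(fun q => f q - c) q| ≤
          (fun q : ℝ × ℝ => ω * (fun _ : ℝ × ℝ => (1:ℝ)) q +
            (ω * C) * (sin ((q.1 - p.1)/2)^2 + sin ((q.2 - p.2)/2)^2)) q := by
        intro q
        have hk := key_bound hf hMf hδ q p
        simp only
        rw [← hωdef, ← hCdef] at hk
        nlinarith [hk]
      have hLh := hlin m n ω (ω * C) (fun _ => (1:ℝ))
        (fun q : ℝ × ℝ => sin ((q.1 - p.1)/2)^2 + sin ((q.2 - p.2)/2)^2) hone (cper_phi p)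
      have habs' := habs (fun q => f q - c) _ (hf.sub_const c) (cper_comb p ω (ω * C)) hkey p
      rw [hLh] at habs'
      simp only at habs'
      -- combine
      have hLφ := hφS p
      have hL1 : L m n (fun _ => (1:ℝ)) p ≤ 1 + A := by
        have := (abs_le.mp (hA p)).2; linarith
      have hb1 : |L m n (fun q => f q - c) p| ≤ ω * (1 + A) + ω * C * S := by
        calc |L m n (fun q => f q - c) p| ≤ ω * L m n (fun _ => (1:ℝ)) p +
            ω * C * L m n (fun q => sin ((q.1 - p.1)/2)^2 + sin ((q.2 - p.2)/2)^2) p := habs'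
          _ ≤ ω * (1 + A) + ω * C * S := by
            have h5 : ω * L m n (fun _ => (1:ℝ)) p ≤ ω * (1 + A) :=
              mul_le_mul_of_nonneg_left hL1 hωnn
            have h6 : ω * C * L m n (fun q => sin ((q.1 - p.1)/2)^2 + sin ((q.2 - p.2)/2)^2) p
                ≤ ω * C * S := mul_le_mul_of_nonneg_left hLφ (by positivity)
            linarith
      have hb2 : |c * (L m n (fun _ => (1:ℝ)) p - 1)| ≤ supNorm f * A := by
        rw [abs_mul]
        exact mul_le_mul (hfs p) (hA p) (abs_nonneg _) hMfs0
      calc |L m n f p - f p| = |L m n (fun q => f q - c) p + c * (L m n (fun _ => (1:ℝ)) p - 1)| := by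
            rw [hdecomp]; congr 1; ring
        _ ≤ |L m n (fun q => f q - c) p| + |c * (L m n (fun _ => (1:ℝ)) p - 1)| := abs_add_le _ _
        _ ≤ ω * (1 + A) + ω * C * S + supNorm f * A := by linarith
    -- supNorm bound for each δ
    have hsup : ∀ δ : ℝ, 0 < δ →
        supNorm (fun p => L m n f p - f p) ≤ modCont f δ * (1 + A) +
          modCont f δ * (π^2/δ^2) * S + supNorm f * A := by
      intro δ hδ
      exact csSup_le ⟨|L m n f (0,0) - f (0,0)|, ⟨(0,0), rfl⟩⟩
        (fun a ⟨p, hp⟩ => hp ▸ master δ hδ p)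
    rcases lt_or_eq_of_le hγ0 with hγpos | hγeq
    · -- γ > 0
      have hb := hsup (γ m n) hγpos
      have hCS : modCont f (γ m n) * (π^2/(γ m n)^2) * S = modCont f (γ m n) * π^2 := by
        rw [← hγsq]; field_simp
      rw [hCS] at hb
      have t1 : 0 ≤ (K - (1 + π^2)) * modCont f (γ m n) :=
        mul_nonneg (by linarith) hω0
      have t2 : 0 ≤ (K - supNorm f) * A := mul_nonneg (by linarith) hA0
      have t3 : 0 ≤ (K - 1) * (A * modCont f (γ m n)) :=
        mul_nonneg (by nlinarith [sq_nonneg π]) (mul_nonneg hA0 hω0)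
      calc supNorm (fun p => L m n f p - f p)
          ≤ modCont f (γ m n) * (1 + A) + modCont f (γ m n) * π^2 + supNorm f * A := hb
        _ ≤ K * (A * modCont f (γ m n) + modCont f (γ m n) + A) := by nlinarith [t1, t2, t3]
    · -- γ = 0
      have hSz : S = 0 := by rw [← hγsq, ← hγeq]; ring
      have hle : supNorm (fun p => L m n f p - f p) ≤ supNorm f * A := by
        apply le_of_forall_pos_le_add
        intro ε hε
        have h1A : (0:ℝ) < 1 + A := by linarith
        obtain ⟨δ, hδ, hucb⟩ := cper_uc hf (show (0:ℝ) < ε / (1 + A) by positivity)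
        have hωδ : modCont f δ ≤ ε / (1 + A) := modCont_le hδ.le hucb
        have := hsup δ hδ
        rw [hSz] at this
        have hstep : modCont f δ * (1 + A) ≤ ε := by
          rw [← div_mul_cancel₀ ε h1A.ne']
          exact mul_le_mul_of_nonneg_right hωδ h1A.le
        nlinarith [this]
      have t2 : 0 ≤ (K - supNorm f) * A := mul_nonneg (by linarith) hA0
      have t4 : 0 ≤ K * (A * modCont f (γ m n) + modCont f (γ m n)) := by
        apply mul_nonneg hK0
        have := mul_nonneg hA0 hω0
        linarith
      calc supNorm (fun p => L m n f p - f p) ≤ supNorm f * A := hle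
        _ ≤ K * (A * modCont f (γ m n) + modCont f (γ m n) + A) := by nlinarith [t2, t4]
  refine ⟨main, ?_⟩
  -- convergence
  intro ε hε
  have hK1' : (0:ℝ) < K + 1 := by linarith
  set c : ℝ := ε / (4 * (K + 1)) with hcdef
  have hc0 : 0 < c := by positivity
  obtain ⟨δ₀, hδ₀, hucb⟩ := cper_uc hf hc0
  have hωδ₀ : modCont f δ₀ ≤ c := modCont_le hδ₀.le hucb
  have hε₁ : (0:ℝ) < min 1 c := by positivity
  obtain ⟨N₁, hN₁⟩ := h0 (min 1 c) hε₁
  obtain ⟨N₂, hN₂⟩ := hγ δ₀ hδ₀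
  refine ⟨max N₁ N₂, fun m n hm hn => ?_⟩
  have hA' := hN₁ m n (le_trans (le_max_left _ _) hm) (le_trans (le_max_left _ _) hn)
  have hγ' := hN₂ m n (le_trans (le_max_right _ _) hm) (le_trans (le_max_right _ _) hn)
  simp only [sub_zero] at hA' hγ'
  set A : ℝ := supNorm fun p => L m n (fun _ => (1:ℝ)) p - 1 with hAdef
  -- basic nonneg facts, recomputed
  obtain ⟨M1, hM10, hM1⟩ := (hmaps m n _ hone).bounded
  have hbound1 : ∀ p, |L m n (fun _ => (1:ℝ)) p - 1| ≤ M1 + 1 := fun p => by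
    calc |L m n (fun _ => (1:ℝ)) p - 1| ≤ |L m n (fun _ => (1:ℝ)) p| + 1 := by
          simpa using abs_sub (L m n (fun _ => (1:ℝ)) p) 1
      _ ≤ M1 + 1 := by linarith [hM1 p]
  have hA0 : 0 ≤ A := supNorm_nonneg hbound1
  have hAlt : A < min 1 c := lt_of_abs_lt hA'
  have hγ0 : 0 ≤ γ m n := by rw [hγdef m n]; exact Real.sqrt_nonneg _
  have hγlt : γ m n < δ₀ := lt_of_abs_lt hγ'
  have hωγ : modCont f (γ m n) ≤ c := (modCont_mono hMf hγ0 hγlt.le).trans hωδ₀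
  have hω0 : 0 ≤ modCont f (γ m n) := modCont_nonneg hMf hγ0
  -- supNorm nonneg
  obtain ⟨M2, hM20, hM2⟩ := (hmaps m n f hf).bounded
  have hbound2 : ∀ p, |L m n f p - f p| ≤ M2 + Mf := fun p => by
    calc |L m n f p - f p| ≤ |L m n f p| + |f p| := abs_sub _ _
      _ ≤ M2 + Mf := add_le_add (hM2 p) (hMf p)
  have hsn0 : 0 ≤ supNorm (fun p => L m n f p - f p) := supNorm_nonneg hbound2
  simp only [sub_zero]
  rw [abs_of_nonneg hsn0]
  have hmain := main m n
  have hsum : A * modCont f (γ m n) + modCont f (γ m n) + A < 3 * c := by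
    have h1 : A * modCont f (γ m n) ≤ 1 * c := by
      apply mul_le_mul (hAlt.le.trans (min_le_left _ _)) hωγ hω0 (by norm_num)
    have h2 : A < c := hAlt.trans_le (min_le_right _ _)
    linarith
  have hfin : K * (A * modCont f (γ m n) + modCont f (γ m n) + A) < ε := by
    have hsum0 : 0 ≤ A * modCont f (γ m n) + modCont f (γ m n) + A := by
      have := mul_nonneg hA0 hω0; linarith
    calc K * (A * modCont f (γ m n) + modCont f (γ m n) + A)
        ≤ (K + 1) * (A * modCont f (γ m n) + modCont f (γ m n) + A) :=
          mul_le_mul_of_nonneg_right (by linarith) hsum0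
      _ < (K + 1) * (3 * c) := by
          exact mul_lt_mul_of_pos_left hsum hK1'
      _ = 3 * ε / 4 := by rw [hcdef]; field_simp
      _ < ε := by linarith
  exact lt_of_le_of_lt hmain hfin
end
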